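/- arXiv:2506.20760 — 5 statements merged into one kernel-verified Lean document; each statement's English description precedes it below -/
import Mathlib

section
/- For real x ≥ e, the principal branch of the Lambert W function satisfies W₀(x) ≤ ln(x) - ln(ln(x)) + (e/(e-1))·(ln(ln(x))/ln(x)). -/
/-!
Write `L = log x ≥ 1`, `t = log L / L` and `c = e / (e - 1)`, and let `v` be the right-hand side,
`v = (1 - t) L + c t`. Then `v e^v ≥ (1 - t) L · (x / L) e^{c t} = x (1 - t) e^{c t}`, and
`(1 - t) e^{c t} ≥ (1 - t)(1 + c t) ≥ 1` because `log L ≤ L / e` gives `t ≤ 1 / e`, i.e.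
`c t ≤ c - 1`. So `y e^y = x ≤ v e^v` with `v > 0`, which forces `y ≤ v`.
-/

open Real

namespace Real

theorem log_le_div_exp_one {x : ℝ} (hx : 0 < x) : log x ≤ x / exp 1 := by
  calc log x ≤ exp (log x - 1) := by linarith [add_one_le_exp (log x - 1)]
    _ = x / exp 1 := by rw [exp_sub, exp_log hx]

theorem one_le_one_sub_mul_exp_mul {c t : ℝ} (ht₀ : 0 ≤ t) (ht₁ : t ≤ 1)
    (hct : c * t ≤ c - 1) : 1 ≤ (1 - t) * exp (c * t) :=
  calc 1 ≤ (1 - t) * (c * t + 1) := by nlinarith [mul_nonneg ht₀ (sub_nonneg.2 hct)]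
    _ ≤ (1 - t) * exp (c * t) := mul_le_mul_of_nonneg_left (add_one_le_exp _) (by linarith)

theorem le_of_mul_exp_le_mul_exp {y u : ℝ} (hu : 0 ≤ u) (h : y * exp y ≤ u * exp u) :
    y ≤ u := by
  by_contra! hlt
  have : u * exp u < y * exp y := mul_lt_mul'' hlt (exp_lt_exp.2 hlt) hu (exp_pos u).le
  linarith

end Real

noncomputable def lambertWUpper (L : ℝ) : ℝ :=
  L - log L + exp 1 / (exp 1 - 1) * (log L / L)

theorem log_div_self_le_one_div_exp_one {L : ℝ} (hL : 0 < L) : log L / L ≤ 1 / exp 1 := by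
  have h := log_le_div_exp_one hL
  rw [le_div_iff₀ (exp_pos 1)] at h
  rw [div_le_div_iff₀ hL (exp_pos 1)]
  linarith

theorem lambertWUpper_eq {L : ℝ} (hL : L ≠ 0) : lambertWUpper L =
    (1 - log L / L) * L + exp 1 / (exp 1 - 1) * (log L / L) := by
  rw [lambertWUpper]
  field_simp

section lambertWUpper

variable {L : ℝ} (hL : 1 ≤ L)
include hL

theorem one_sub_log_div_self_mul_le_lambertWUpper :
    (1 - log L / L) * L ≤ lambertWUpper L := by
  rw [lambertWUpper_eq (by positivity), le_add_iff_nonneg_right]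
  have he : 1 < exp 1 := one_lt_exp_iff.2 one_pos
  have : 0 ≤ log L / L := div_nonneg (log_nonneg hL) (by linarith)
  positivity

theorem lambertWUpper_pos : 0 < lambertWUpper L := by
  refine lt_of_lt_of_le ?_ (one_sub_log_div_self_mul_le_lambertWUpper hL)
  have : log L / L < 1 := (log_div_self_le_one_div_exp_one (by linarith)).trans_lt
    ((div_lt_one (exp_pos 1)).2 (one_lt_exp_iff.2 one_pos))
  nlinarith

theorem exp_le_lambertWUpper_mul_exp : exp L ≤ lambertWUpper L * exp (lambertWUpper L) := by
  set c := exp 1 / (exp 1 - 1)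
  set t := log L / L
  have hL₀ : 0 < L := by linarith
  have ht₀ : 0 ≤ t := div_nonneg (log_nonneg hL) hL₀.le
  have ht_le : t ≤ 1 / exp 1 := log_div_self_le_one_div_exp_one hL₀
  have he : 1 < exp 1 := one_lt_exp_iff.2 one_pos
  have ht₁ : t ≤ 1 := ht_le.trans (by rw [div_le_one (exp_pos 1)]; exact he.le)
  -- `c = e / (e - 1)` is exactly the constant with `c * (1 / e) = c - 1`
  have hct : c * t ≤ c - 1 := calc
    c * t ≤ c * (1 / exp 1) := by gcongr
    _ = c - 1 := by
      have : exp 1 - 1 ≠ 0 := by linarith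
      simp only [c]; field_simp; ring
  have hexp : exp (lambertWUpper L) = exp L / L * exp (c * t) := by
    rw [lambertWUpper, exp_add, exp_sub, exp_log hL₀]
  calc exp L ≤ exp L * ((1 - t) * exp (c * t)) :=
        le_mul_of_one_le_right (exp_pos L).le (one_le_one_sub_mul_exp_mul ht₀ ht₁ hct)
    _ = (1 - t) * L * exp (lambertWUpper L) := by rw [hexp]; field_simp
    _ ≤ lambertWUpper L * exp (lambertWUpper L) := by
        gcongr; exact one_sub_log_div_self_mul_le_lambertWUpper hL

end lambertWUpper

theorem lambertW_principal_upper_bound_general (x y : ℝ) (hx : Real.exp 1 ≤ x)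
    (hxy : y * Real.exp y = x) :
    y ≤ Real.log x - Real.log (Real.log x) +
      (Real.exp 1 / (Real.exp 1 - 1)) * (Real.log (Real.log x) / Real.log x) := by
  have hx₀ : 0 < x := (exp_pos 1).trans_le hx
  have hlog : 1 ≤ log x := by rwa [le_log_iff_exp_le hx₀]
  have hbound := exp_le_lambertWUpper_mul_exp hlog
  rw [exp_log hx₀] at hbound
  exact le_of_mul_exp_le_mul_exp (lambertWUpper_pos hlog).le (hxy.trans_le hbound)

/-- For real `x ≥ e`, the principal branch of the Lambert W function (characterized as the
unique `y ≥ -1` with `y * exp y = x`) satisfies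
`W₀(x) ≤ ln x - ln (ln x) + (e/(e-1)) * (ln (ln x) / ln x)`. -/
theorem lambertW_principal_upper_bound (x y : ℝ) (hx : Real.exp 1 ≤ x)
    (hy : -1 ≤ y) (hxy : y * Real.exp y = x) :
    y ≤ Real.log x - Real.log (Real.log x) +
      (Real.exp 1 / (Real.exp 1 - 1)) * (Real.log (Real.log x) / Real.log x) :=
  lambertW_principal_upper_bound_general x y hx hxy
end

section
/- Let U(t,k) = e^{-it(kL+H)} for Hermitian matrices L and H, and let U^{(q)}(t,k) denote the q-th partial derivative of U with respect to k. Then for every integer q ≥ 0 and all t ≥ 0, ‖U^{(q)}(t,k)‖ ≤ t^q · q^q · ‖L‖^q. -/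
/-!
Write the exponent as `t • (k • B + A)` with `B = -iL` and `A = -iH` skew-adjoint. Expanding
`exp (t • (k • B + A))` in powers of `t` and differentiating termwise in `k` shows that the
`k`-derivatives `U_q(t)` satisfy `U_q' = (k • B + A) U_q + q B U_{q-1}` with `U_q(0) = 0` for
`q ≥ 1`. Since `exp (s • (k • B + A))` is unitary, the derivative of
`exp (-s • (k • B + A)) U_q(s)` has norm at most `q ‖B‖ ‖U_{q-1}(s)‖`, and comparison with
`(s ‖B‖) ^ q` gives `‖U_q(t)‖ ≤ (t ‖L‖) ^ q ≤ t ^ q q ^ q ‖L‖ ^ q` by induction on `q`.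
-/

open NormedSpace
open scoped Nat

section ExpSeries

variable {E : Type*} [NormedAddCommGroup E] [NormedSpace ℝ E]

theorem norm_pow_div_factorial_smul_le {n : ℕ} {c : E} {M R T y : ℝ} (hc : ‖c‖ ≤ M * R ^ n)
    (hy : |y| ≤ T) : ‖(y ^ n / n ! : ℝ) • c‖ ≤ M * ((T * R) ^ n / n !) := by
  have hT : 0 ≤ T := (abs_nonneg y).trans hy
  rw [norm_smul, norm_div, norm_pow, Real.norm_eq_abs, RCLike.norm_natCast]
  calc |y| ^ n / n ! * ‖c‖ ≤ T ^ n / n ! * (M * R ^ n) := by gcongr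
    _ = M * ((T * R) ^ n / n !) := by ring

theorem hasDerivAt_pow_succ_div_factorial (n : ℕ) (t : ℝ) :
    HasDerivAt (fun t : ℝ => t ^ (n + 1) / (n + 1)!) (t ^ n / n !) t := by
  refine ((hasDerivAt_pow (n + 1) t).div_const ((n + 1)! : ℝ)).congr_deriv ?_
  rw [Nat.factorial_succ, Nat.add_sub_cancel]
  push_cast
  field_simp

variable [CompleteSpace E] {c : ℕ → E} {M R : ℝ}

theorem summable_pow_div_factorial_smul (hc : ∀ n, ‖c n‖ ≤ M * R ^ n) (t : ℝ) :
    Summable fun n => (t ^ n / n ! : ℝ) • c n :=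
  .of_norm_bounded ((Real.summable_pow_div_factorial _).mul_left M) fun n =>
    norm_pow_div_factorial_smul_le (hc n) le_rfl

theorem hasDerivAt_tsum_pow_div_factorial_smul (hc : ∀ n, ‖c n‖ ≤ M * R ^ n) (t : ℝ) :
    HasDerivAt (fun t => ∑' n, (t ^ n / n ! : ℝ) • c n)
      (∑' n, (t ^ n / n ! : ℝ) • c (n + 1)) t := by
  have hsplit : (fun t => ∑' n, (t ^ n / n ! : ℝ) • c n) =
      fun t => c 0 + ∑' n, (t ^ (n + 1) / (n + 1)! : ℝ) • c (n + 1) := by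
    ext t
    simp [(summable_pow_div_factorial_smul hc t).tsum_eq_zero_add]
  have hshift : ∀ n, ‖c (n + 1)‖ ≤ M * R * R ^ n := fun n => (hc (n + 1)).trans_eq (by ring)
  rw [hsplit]
  refine (hasDerivAt_tsum_of_isPreconnected
    ((Real.summable_pow_div_factorial ((|t| + 1) * R)).mul_left (M * R))
    Metric.isOpen_ball (convex_ball 0 (|t| + 1)).isPreconnected
    (fun n y _ => (hasDerivAt_pow_succ_div_factorial n y).smul_const (c (n + 1)))
    (fun n y hy => norm_pow_div_factorial_smul_le (hshift n) ?_) (Metric.mem_ball_self ?_)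
    ((summable_nat_add_iff 1).mpr (summable_pow_div_factorial_smul hc 0)) ?_).const_add (c 0)
  · exact (mem_ball_zero_iff.mp hy).le
  · positivity
  · simp

end ExpSeries

section Duhamel

variable {𝔸 : Type*} [NormedRing 𝔸] [NormedAlgebra ℝ 𝔸] [CompleteSpace 𝔸]

theorem norm_le_of_hasDerivAt_mul_add {X : 𝔸} (hX : ∀ s : ℝ, ‖exp (s • X)‖ ≤ 1)
    {F G : ℝ → 𝔸} {g g' : ℝ → ℝ} (hF : ∀ s, HasDerivAt F (X * F s + G s) s)
    (hg : ∀ s, HasDerivAt g (g' s) s) (hG : ∀ s, 0 ≤ s → ‖G s‖ ≤ g' s) (h0 : ‖F 0‖ ≤ g 0)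
    {t : ℝ} (ht : 0 ≤ t) : ‖F t‖ ≤ g t := by
  set Φ : ℝ → 𝔸 := fun s => exp (s • -X) * F s
  have hΦ : ∀ s, HasDerivAt Φ (exp (s • -X) * G s) s := fun s =>
    ((hasDerivAt_exp_smul_const (-X) s).mul (hF s)).congr_deriv (by noncomm_ring)
  have hΦt : ‖Φ t‖ ≤ g t := by
    refine image_norm_le_of_norm_deriv_right_le_deriv_boundary
      (fun s _ => (hΦ s).continuousAt.continuousWithinAt) (fun s _ => (hΦ s).hasDerivWithinAt)
      (by simpa [Φ] using h0) hg (fun s hs => ?_) ⟨ht, le_rfl⟩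
    calc ‖exp (s • -X) * G s‖ ≤ ‖exp (s • -X)‖ * ‖G s‖ := norm_mul_le _ _
      _ ≤ 1 * g' s := by
        gcongr
        · simpa [smul_neg, neg_smul] using hX (-s)
        · exact hG s hs.1
      _ = g' s := one_mul _
  have hinv : exp (t • X) * exp (t • -X) = 1 := by
    have hr : ∀ x : 𝔸, x ∈ Metric.eball 0 (expSeries ℝ 𝔸).radius := by
      simp [expSeries_radius_eq_top]
    rw [smul_neg, ← exp_add_of_commute_of_mem_ball (Commute.refl _).neg_right (hr _) (hr _),
      add_neg_cancel, exp_zero]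
  calc ‖F t‖ = ‖exp (t • X) * Φ t‖ := by rw [← mul_assoc, hinv, one_mul]
    _ ≤ ‖exp (t • X)‖ * ‖Φ t‖ := norm_mul_le _ _
    _ ≤ 1 * g t := by gcongr; exact hX t
    _ = g t := one_mul _

end Duhamel

namespace AffineExp

variable {𝔸 : Type*} [NormedRing 𝔸] [NormedAlgebra ℝ 𝔸]

/-- `powDeriv A B q n k` is the `q`-th derivative of `k ↦ (k • B + A) ^ n`; the recursion is the
Leibniz rule applied to `(k • B + A) ^ (n + 1) = (k • B + A) * (k • B + A) ^ n`. -/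
noncomputable def powDeriv (A B : 𝔸) : ℕ → ℕ → ℝ → 𝔸
  | q, 0, _ => if q = 0 then 1 else 0
  | q, n + 1, k => (k • B + A) * powDeriv A B q n k + (q : ℝ) • (B * powDeriv A B (q - 1) n k)

variable (A B : 𝔸)

theorem powDeriv_zero (n : ℕ) (k : ℝ) : powDeriv A B 0 n k = (k • B + A) ^ n := by
  induction n with
  | zero => simp [powDeriv]
  | succ n ih => simp [powDeriv, ih, pow_succ']

theorem hasDerivAt_powDeriv (q n : ℕ) (k : ℝ) :
    HasDerivAt (powDeriv A B q n) (powDeriv A B (q + 1) n k) k := by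
  induction n generalizing q with
  | zero => simpa [powDeriv] using hasDerivAt_const k (if q = 0 then (1 : 𝔸) else 0)
  | succ n ih =>
    have hX : HasDerivAt (fun k : ℝ => k • B + A) B k := by
      simpa using ((hasDerivAt_id k).smul_const B).add_const A
    refine ((hX.mul (ih q)).add (((ih (q - 1)).const_mul B).const_smul (q : ℝ))).congr_deriv ?_
    cases q with
    | zero => simp [powDeriv, add_comm]
    | succ q => simp only [powDeriv, Nat.add_sub_cancel]; push_cast; module

theorem norm_powDeriv_le (q n : ℕ) (k : ℝ) :
    ‖powDeriv A B q n k‖ ≤ ‖(1 : 𝔸)‖ * (‖k • B + A‖ + q * ‖B‖) ^ n := by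
  induction n generalizing q with
  | zero => by_cases hq : q = 0 <;> simp [powDeriv, hq]
  | succ n ih =>
    calc ‖powDeriv A B q (n + 1) k‖
        ≤ ‖k • B + A‖ * ‖powDeriv A B q n k‖ + q * (‖B‖ * ‖powDeriv A B (q - 1) n k‖) := by
          refine (norm_add_le _ _).trans (add_le_add (norm_mul_le _ _) ?_)
          rw [norm_smul, Real.norm_natCast]
          gcongr
          exact norm_mul_le _ _
      _ ≤ ‖k • B + A‖ * (‖(1 : 𝔸)‖ * (‖k • B + A‖ + q * ‖B‖) ^ n)
          + q * (‖B‖ * (‖(1 : 𝔸)‖ * (‖k • B + A‖ + q * ‖B‖) ^ n)) := by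
          gcongr
          · exact ih q
          · exact (ih (q - 1)).trans (by gcongr; exact Nat.sub_le q 1)
      _ = ‖(1 : 𝔸)‖ * (‖k • B + A‖ + q * ‖B‖) ^ (n + 1) := by ring

theorem norm_add_smul_le_of_mem_ball {k y : ℝ} (hy : y ∈ Metric.ball k 1) :
    ‖y • B + A‖ ≤ ‖k • B + A‖ + ‖B‖ := by
  have hyk : ‖y - k‖ ≤ 1 := (mem_ball_iff_norm.mp hy).le
  calc ‖y • B + A‖ = ‖(k • B + A) + (y - k) • B‖ := by rw [sub_smul]; abel_nf
    _ ≤ ‖k • B + A‖ + ‖y - k‖ * ‖B‖ := (norm_add_le _ _).trans_eq (by rw [norm_smul])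
    _ ≤ ‖k • B + A‖ + ‖B‖ := by gcongr; exact mul_le_of_le_one_left (norm_nonneg _) hyk

noncomputable def expDeriv (q : ℕ) (t k : ℝ) : 𝔸 :=
  ∑' n, (t ^ n / n ! : ℝ) • powDeriv A B q n k

theorem expDeriv_zero (t k : ℝ) : expDeriv A B 0 t k = exp (t • (k • B + A)) := by
  rw [exp_eq_tsum ℝ]
  refine tsum_congr fun n => ?_
  rw [powDeriv_zero, smul_pow, smul_smul, div_eq_inv_mul]

theorem expDeriv_succ_time_zero (q : ℕ) (k : ℝ) : expDeriv A B (q + 1) 0 k = 0 :=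
  (tsum_congr fun n => by cases n <;> simp [powDeriv]).trans tsum_zero

variable [CompleteSpace 𝔸]

theorem hasDerivAt_expDeriv (q : ℕ) (t k : ℝ) :
    HasDerivAt (expDeriv A B q t) (expDeriv A B (q + 1) t k) k := by
  have hbound : ∀ n, ∀ y ∈ Metric.ball k 1, ‖powDeriv A B (q + 1) n y‖ ≤
      ‖(1 : 𝔸)‖ * (‖k • B + A‖ + ‖B‖ + (q + 1 : ℕ) * ‖B‖) ^ n := fun n y hy =>
    (norm_powDeriv_le A B _ n y).trans (by gcongr; exact norm_add_smul_le_of_mem_ball A B hy)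
  exact hasDerivAt_tsum_of_isPreconnected ((Real.summable_pow_div_factorial _).mul_left _)
    Metric.isOpen_ball (convex_ball k 1).isPreconnected
    (fun n y _ => (hasDerivAt_powDeriv A B q n y).const_smul _)
    (fun n y hy => norm_pow_div_factorial_smul_le (hbound n y hy) le_rfl)
    (Metric.mem_ball_self one_pos)
    (summable_pow_div_factorial_smul (norm_powDeriv_le A B q · k) t)
    (Metric.mem_ball_self one_pos)

theorem iteratedDeriv_exp_smul (q : ℕ) (t : ℝ) :
    iteratedDeriv q (fun k : ℝ => exp (t • (k • B + A))) = expDeriv A B q t := by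
  induction q with
  | zero => ext k; simp [expDeriv_zero]
  | succ q ih =>
    rw [iteratedDeriv_succ, ih]
    ext k
    exact (hasDerivAt_expDeriv A B q t k).deriv

theorem hasDerivAt_expDeriv_time (q : ℕ) (t k : ℝ) :
    HasDerivAt (fun t => expDeriv A B q t k)
      ((k • B + A) * expDeriv A B q t k + (q : ℝ) • (B * expDeriv A B (q - 1) t k)) t := by
  have hsum : ∀ p, Summable fun n => (t ^ n / n ! : ℝ) • powDeriv A B p n k :=
    fun p => summable_pow_div_factorial_smul (norm_powDeriv_le A B p · k) t
  refine (hasDerivAt_tsum_pow_div_factorial_smul (norm_powDeriv_le A B q · k) t).congr_deriv ?_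
  simp only [powDeriv, smul_add, smul_comm _ (q : ℝ), ← mul_smul_comm]
  rw [Summable.tsum_add ((hsum q).mul_left _) (((hsum _).const_smul (q : ℝ)).mul_left B),
    (hsum q).tsum_mul_left, ((hsum _).const_smul _).tsum_mul_left, (hsum _).tsum_const_smul]
  rfl

theorem norm_expDeriv_le {k : ℝ} (hX : ∀ s : ℝ, ‖exp (s • (k • B + A))‖ ≤ 1) (q : ℕ) {t : ℝ}
    (ht : 0 ≤ t) : ‖expDeriv A B q t k‖ ≤ (t * ‖B‖) ^ q := by
  induction q generalizing t with
  | zero => simpa [expDeriv_zero] using hX t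
  | succ q ih =>
    have hg : ∀ s : ℝ, HasDerivAt (fun s => (s * ‖B‖) ^ (q + 1))
        ((q + 1 : ℕ) * (s * ‖B‖) ^ q * ‖B‖) s := fun s => by
      simpa using ((hasDerivAt_id s).mul_const ‖B‖).fun_pow (q + 1)
    refine norm_le_of_hasDerivAt_mul_add hX (hasDerivAt_expDeriv_time A B (q + 1) · k) hg
      (fun s hs => ?_) (by simp [expDeriv_succ_time_zero]) ht
    calc ‖((q + 1 : ℕ) : ℝ) • (B * expDeriv A B q s k)‖
        ≤ (q + 1 : ℕ) * (‖B‖ * ‖expDeriv A B q s k‖) := by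
          rw [norm_smul, Real.norm_natCast]; gcongr; exact norm_mul_le _ _
      _ ≤ (q + 1 : ℕ) * (‖B‖ * (s * ‖B‖) ^ q) := by gcongr; exact ih hs
      _ = (q + 1 : ℕ) * (s * ‖B‖) ^ q * ‖B‖ := by ring

theorem norm_iteratedDeriv_exp_smul_le {k : ℝ} (hX : ∀ s : ℝ, ‖exp (s • (k • B + A))‖ ≤ 1)
    (q : ℕ) {t : ℝ} (ht : 0 ≤ t) :
    ‖iteratedDeriv q (fun k : ℝ => exp (t • (k • B + A))) k‖ ≤ (t * ‖B‖) ^ q := by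
  rw [iteratedDeriv_exp_smul]
  exact norm_expDeriv_le A B hX q ht

end AffineExp

theorem norm_exp_le_one_of_mem_skewAdjoint {E : Type*} [NormedAddCommGroup E]
    [InnerProductSpace ℂ E] [CompleteSpace E] {X : E →L[ℂ] E}
    (hX : X ∈ skewAdjoint (E →L[ℂ] E)) : ‖exp X‖ ≤ 1 := by
  -- `exp` does not depend on this choice; it only serves to state the unitarity lemma
  let : NormedAlgebra ℚ (E →L[ℂ] E) := .restrictScalars ℚ ℂ _
  have hu := exp_mem_unitary_of_mem_skewAdjoint hX
  simpa using (CStarRing.norm_mem_unitary_mul 1 hu).trans_le ContinuousLinearMap.norm_id_le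

/-- For `U(t,k) = e^{-it(kL+H)}` with `L`, `H` self-adjoint operators on a
finite-dimensional complex Hilbert space, the `q`-th derivative in `k` satisfies
`‖∂_k^q U(t,k)‖ ≤ t^q q^q ‖L‖^q` for all `t ≥ 0`. -/
theorem iteratedDeriv_unitary_bound {E : Type*} [NormedAddCommGroup E]
    [InnerProductSpace ℂ E] [FiniteDimensional ℂ E]
    (L H : E →L[ℂ] E) (hL : IsSelfAdjoint L) (hH : IsSelfAdjoint H)
    (t : ℝ) (ht : 0 ≤ t) (q : ℕ) (k : ℝ) :
    ‖iteratedDeriv q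
        (fun k' : ℝ => NormedSpace.exp ((-(Complex.I * t)) • ((k' : ℂ) • L + H))) k‖ ≤
      t ^ q * (q : ℝ) ^ q * ‖L‖ ^ q := by
  set B := -(Complex.I • L)
  set A := -(Complex.I • H)
  have hexponent : ∀ k' : ℝ,
      (-(Complex.I * t)) • ((k' : ℂ) • L + H) = t • (k' • B + A) := fun k' => by
    match_scalars <;> simp only [Complex.coe_algebraMap] <;> ring
  have hskew : k • B + A ∈ skewAdjoint (E →L[ℂ] E) := by
    refine add_mem (skewAdjoint.smul_mem k (neg_mem ?_)) (neg_mem ?_) <;>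
      simpa [Complex.I_smul_mem_skewAdjoint_iff_isSelfAdjoint]
  have hq : (1 : ℝ) ≤ (q : ℝ) ^ q := by
    exact_mod_cast (Nat.factorial_pos q).trans_le (Nat.factorial_le_pow q)
  simp only [hexponent]
  calc _ ≤ (t * ‖B‖) ^ q := AffineExp.norm_iteratedDeriv_exp_smul_le A B
        (fun s => norm_exp_le_one_of_mem_skewAdjoint (skewAdjoint.smul_mem s hskew)) q ht
    _ ≤ (t * ‖L‖) ^ q := by gcongr; simp [B, norm_smul]
    _ = t ^ q * 1 * ‖L‖ ^ q := by ring
    _ ≤ t ^ q * (q : ℝ) ^ q * ‖L‖ ^ q := by gcongr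
end

section
/- Let 0 < Δ ≤ 2 and 0 < ε ≤ 2√(2/(eπ)), and let n = √((32/Δ²)·ln(8/(πε²))·e²·ln(64·(√2/Δ)·ln^{1/2}(8/(πε²))/(3√π ε))). Then n ≤ (8e/Δ)·√(1 + 1/e)·ln(64√2/(3√π·Δ·ε)). -/
open Real

/-- Proposition (degree upper bound): for `0 < Δ ≤ 2` and `0 < ε ≤ 2√(2/(eπ))`, the degree
`n = √((32/Δ²)·ln(8/(πε²))·e²·ln(64·(√2/Δ)·√(ln(8/(πε²)))/(3√π ε)))` satisfies
`n ≤ (8e/Δ)·√(1+1/e)·ln(64√2/(3√π·Δ·ε))`. -/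
theorem degree_upper_bound (Δ ε n : ℝ) (hΔ : 0 < Δ) (hΔ2 : Δ ≤ 2)
    (hε : 0 < ε) (hε2 : ε ≤ 2 * Real.sqrt (2 / (Real.exp 1 * π)))
    (hn : n = Real.sqrt ((32 / Δ ^ 2) * Real.log (8 / (π * ε ^ 2)) * Real.exp 1 ^ 2 *
      Real.log (64 * (Real.sqrt 2 / Δ) * Real.sqrt (Real.log (8 / (π * ε ^ 2))) /
        (3 * Real.sqrt π * ε)))) :
    n ≤ (8 * Real.exp 1 / Δ) * Real.sqrt (1 + 1 / Real.exp 1) *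
      Real.log (64 * Real.sqrt 2 / (3 * Real.sqrt π * Δ * ε)) := by
  have hπ : (0:ℝ) < π := Real.pi_pos
  have hE : (0:ℝ) < Real.exp 1 := Real.exp_pos 1
  set E := Real.exp 1 with hEdef
  set y := Real.log (8 / (π * ε ^ 2)) with hydef
  set a := 64 * Real.sqrt 2 / (3 * Real.sqrt π * Δ * ε) with hadef
  set L := Real.log a with hLdef
  have hsπ : (0:ℝ) < Real.sqrt π := Real.sqrt_pos.mpr hπ
  have hs2 : (0:ℝ) < Real.sqrt 2 := Real.sqrt_pos.mpr (by norm_num)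
  have ha : 0 < a := by rw [hadef]; positivity
  -- ε² ≤ 8/(E·π)
  have hε2sq : ε ^ 2 ≤ 8 / (E * π) := by
    have h := pow_le_pow_left₀ hε.le hε2 2
    have h2 : (2 * Real.sqrt (2 / (E * π))) ^ 2 = 8 / (E * π) := by
      rw [mul_pow, Real.sq_sqrt (by positivity)]; ring
    linarith [h2 ▸ h]
  have hx : (0:ℝ) < 8 / (π * ε ^ 2) := by positivity
  -- y ≥ 1
  have hy1 : 1 ≤ y := by
    rw [hydef, Real.le_log_iff_exp_le hx, le_div_iff₀ (by positivity)]
    have h := (le_div_iff₀ (by positivity : (0:ℝ) < E * π)).mp hε2sq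
    nlinarith [h]
  have hy0 : 0 < y := by linarith
  -- a² = 8192/(9πΔ²ε²)
  have hasq : a ^ 2 = 8192 / (9 * π * Δ ^ 2 * ε ^ 2) := by
    rw [hadef, div_pow,
      show (64 * Real.sqrt 2) ^ 2 = 8192 by
        rw [mul_pow, Real.sq_sqrt (by norm_num : (0:ℝ) ≤ 2)]; norm_num,
      show (3 * Real.sqrt π * Δ * ε) ^ 2 = 9 * π * Δ ^ 2 * ε ^ 2 by
        rw [mul_pow, mul_pow, mul_pow, Real.sq_sqrt hπ.le]; ring]
  -- y ≤ 2L
  have hyL : y ≤ 2 * L := by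
    have h2L : 2 * L = Real.log (a ^ 2) := by
      rw [Real.log_pow]; push_cast; ring
    rw [h2L, hasq, hydef]
    apply Real.log_le_log hx
    rw [div_le_div_iff₀ (by positivity) (by positivity)]
    have h4 : Δ ^ 2 ≤ 4 := by nlinarith
    have hpe : (0:ℝ) < π * ε ^ 2 := by positivity
    nlinarith [mul_le_mul_of_nonneg_right h4 hpe.le]
  have hL : (0:ℝ) < L := by linarith
  -- log y ≤ 2L/E
  have hlogy0 : 0 ≤ Real.log y := Real.log_nonneg hy1
  have hlogyE : Real.log y ≤ y / E := by
    have h1 : Real.log (y / E) ≤ y / E - 1 := Real.log_le_sub_one_of_pos (by positivity)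
    have h2 : Real.log (y / E) = Real.log y - 1 := by
      rw [Real.log_div (ne_of_gt hy0) (ne_of_gt hE), hEdef, Real.log_exp]
    linarith
  have hlogyL : Real.log y ≤ 2 * L / E := by
    have h : y / E ≤ 2 * L / E := by gcongr
    linarith
  -- rewrite inner log
  have hinner : 64 * (Real.sqrt 2 / Δ) * Real.sqrt y / (3 * Real.sqrt π * ε) =
      a * Real.sqrt y := by
    rw [hadef]; field_simp
  have hlogin : Real.log (64 * (Real.sqrt 2 / Δ) * Real.sqrt y / (3 * Real.sqrt π * ε)) =
      L + Real.log y / 2 := by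
    rw [hinner, Real.log_mul (ne_of_gt ha) (ne_of_gt (Real.sqrt_pos.mpr hy0)),
      Real.log_sqrt hy0.le, hLdef]
  -- the core inequality
  have hcore : (32 / Δ ^ 2) * y * E ^ 2 * (L + Real.log y / 2) ≤
      ((8 * E / Δ) * Real.sqrt (1 + 1 / E) * L) ^ 2 := by
    have hsq : Real.sqrt (1 + 1 / E) ^ 2 = 1 + 1 / E := Real.sq_sqrt (by positivity)
    have hmul : y * (2 * L + Real.log y) ≤ (2 * L) * (2 * L + 2 * L / E) :=
      mul_le_mul hyL (by linarith) (by linarith) (by linarith)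
    have hrhs : ((8 * E / Δ) * Real.sqrt (1 + 1 / E) * L) ^ 2 =
        (E ^ 2 / Δ ^ 2) * (64 * (1 + 1 / E) * L ^ 2) := by
      rw [mul_pow, mul_pow, hsq, div_pow, mul_pow]; ring
    rw [hrhs]
    have hlhs : (32 / Δ ^ 2) * y * E ^ 2 * (L + Real.log y / 2) =
        (E ^ 2 / Δ ^ 2) * (16 * (y * (2 * L + Real.log y))) := by ring
    rw [hlhs]
    apply mul_le_mul_of_nonneg_left _ (by positivity)
    calc 16 * (y * (2 * L + Real.log y)) ≤ 16 * ((2 * L) * (2 * L + 2 * L / E)) := by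
          linarith
      _ = 64 * (1 + 1 / E) * L ^ 2 := by field_simp; ring
  have hRHS0 : 0 ≤ (8 * E / Δ) * Real.sqrt (1 + 1 / E) * L := by positivity
  rw [hn, hlogin]
  calc Real.sqrt ((32 / Δ ^ 2) * y * E ^ 2 * (L + Real.log y / 2))
      ≤ Real.sqrt (((8 * E / Δ) * Real.sqrt (1 + 1 / E) * L) ^ 2) :=
        Real.sqrt_le_sqrt hcore
    _ = (8 * E / Δ) * Real.sqrt (1 + 1 / E) * L := Real.sqrt_sq hRHS0
end

section
/- Let ε ∈ (0, √(2/(eπ))], Δ > 0, and k = (√2/Δ)·√(ln(2/(πε²))). Then for all real x with |x| ≥ Δ/2, |erf(kx) - sgn(x)| ≤ ε, where erf is the Gauss error function and sgn the sign function. -/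
/-!
For `y > 0`, `∫_y^∞ e^{-s²} ds ≤ (1/y) ∫_y^∞ s e^{-s²} ds = e^{-y²}/(2y)`, so
`|erf y - 1| ≤ e^{-y²}/(y√π)`; this bound decreases in `y`, and `erf` is odd, so it also bounds
`|erf x - sgn x|` whenever `|x| ≥ y`. At `y₀ = kΔ/2 = √(L/2)` with `L = ln(2/(πε²))` the square of
the bound is `e^{-L}/(πL/2) = ε²/L`, which is at most `ε²` because `ε ≤ √(2/(eπ))` means `L ≥ 1`.
-/

open Real

/-- The Gauss error function `erf x = (2/√π) ∫₀ˣ e^{-s²} ds`. -/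
noncomputable def erf (x : ℝ) : ℝ := (2 / Real.sqrt π) * ∫ s in (0:ℝ)..x, Real.exp (-s ^ 2)

open MeasureTheory Set Filter

lemma integrable_exp_neg_sq : Integrable fun s : ℝ => exp (-s ^ 2) := by
  simpa using integrable_exp_neg_mul_sq one_pos

lemma integral_Ioi_mul_exp_neg_sq (y : ℝ) :
    ∫ s in Ioi y, s * exp (-s ^ 2) = exp (-y ^ 2) / 2 := by
  have hderiv : ∀ s ∈ Ici y, HasDerivAt (fun s : ℝ => -exp (-s ^ 2) / 2) (s * exp (-s ^ 2)) s := by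
    intro s _
    have h : HasDerivAt (fun s : ℝ => -exp (-s ^ 2) / 2) _ s :=
      (((hasDerivAt_pow 2 s).neg).exp.neg).div_const 2
    convert h using 1
    simp only [Pi.neg_apply, Nat.cast_ofNat]
    ring
  have hint : IntegrableOn (fun s : ℝ => s * exp (-s ^ 2)) (Ioi y) := by
    simpa using (integrable_mul_exp_neg_mul_sq one_pos).integrableOn
  have hlim : Tendsto (fun s : ℝ => -exp (-s ^ 2) / 2) atTop (nhds 0) := by
    have := ((tendsto_exp_atBot.comp
      (tendsto_neg_atBot_iff.mpr (tendsto_pow_atTop two_ne_zero))).neg).div_const 2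
    simpa using this
  rw [integral_Ioi_of_hasDerivAt_of_tendsto' hderiv hint hlim]
  ring

lemma integral_Ioi_exp_neg_sq_le {y : ℝ} (hy : 0 < y) :
    ∫ s in Ioi y, exp (-s ^ 2) ≤ exp (-y ^ 2) / (2 * y) := by
  have hint : Integrable fun s : ℝ => y⁻¹ * (s * exp (-s ^ 2)) := by
    simpa using (integrable_mul_exp_neg_mul_sq one_pos).const_mul y⁻¹
  have hmono : ∫ s in Ioi y, exp (-s ^ 2) ≤ ∫ s in Ioi y, y⁻¹ * (s * exp (-s ^ 2)) := by
    refine setIntegral_mono_on integrable_exp_neg_sq.integrableOn hint.integrableOn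
      measurableSet_Ioi fun s (hs : y < s) => ?_
    rw [← mul_assoc, le_mul_iff_one_le_left (exp_pos _), inv_mul_eq_div, one_le_div hy]
    exact hs.le
  calc ∫ s in Ioi y, exp (-s ^ 2)
      ≤ y⁻¹ * (exp (-y ^ 2) / 2) := by
        rwa [integral_const_mul, integral_Ioi_mul_exp_neg_sq] at hmono
    _ = exp (-y ^ 2) / (2 * y) := by field_simp

lemma erf_eq_one_sub (y : ℝ) : erf y = 1 - 2 / √π * ∫ s in Ioi y, exp (-s ^ 2) := by
  have hhalf : ∫ s in Ioi (0 : ℝ), exp (-s ^ 2) = √π / 2 := by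
    simpa using integral_gaussian_Ioi 1
  have hpi : √π ≠ 0 := by positivity
  rw [erf, ← intervalIntegral.integral_Ioi_sub_Ioi' integrable_exp_neg_sq.integrableOn
    integrable_exp_neg_sq.integrableOn, hhalf]
  field_simp

lemma erf_neg (y : ℝ) : erf (-y) = -erf y := by
  rw [erf, erf, ← mul_neg, ← intervalIntegral.integral_symm, ← neg_zero,
    ← intervalIntegral.integral_comp_neg]
  simp only [neg_zero, even_two, Even.neg_pow]

lemma abs_erf_sub_one_le {y : ℝ} (hy : 0 < y) :
    |erf y - 1| ≤ exp (-y ^ 2) / (y * √π) := by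
  have htail : 0 ≤ ∫ s in Ioi y, exp (-s ^ 2) :=
    setIntegral_nonneg measurableSet_Ioi fun s _ => (exp_pos _).le
  rw [erf_eq_one_sub, sub_sub_cancel_left, abs_neg, abs_of_nonneg (by positivity)]
  calc 2 / √π * ∫ s in Ioi y, exp (-s ^ 2)
      ≤ 2 / √π * (exp (-y ^ 2) / (2 * y)) := by gcongr; exact integral_Ioi_exp_neg_sq_le hy
    _ = exp (-y ^ 2) / (y * √π) := by field_simp

lemma abs_erf_sub_sign_le {y₀ x : ℝ} (hy₀ : 0 < y₀) (hx : y₀ ≤ |x|) :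
    |erf x - Real.sign x| ≤ exp (-y₀ ^ 2) / (y₀ * √π) := by
  have hbound : exp (-|x| ^ 2) / (|x| * √π) ≤ exp (-y₀ ^ 2) / (y₀ * √π) := by gcongr
  refine le_trans ?_ hbound
  rcases (abs_pos.mp (hy₀.trans_le hx)).lt_or_gt with hneg | hpos
  · rw [Real.sign_of_neg hneg, abs_of_neg hneg,
      show erf x - -1 = -(erf (-x) - 1) by rw [erf_neg]; ring, abs_neg]
    exact abs_erf_sub_one_le (neg_pos.2 hneg)
  · rw [Real.sign_of_pos hpos, abs_of_pos hpos]
    exact abs_erf_sub_one_le hpos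

lemma Real.sign_mul_of_pos {k : ℝ} (hk : 0 < k) (x : ℝ) : Real.sign (k * x) = Real.sign x := by
  rcases lt_trichotomy x 0 with hx | rfl | hx
  · rw [Real.sign_of_neg (mul_neg_of_pos_of_neg hk hx), Real.sign_of_neg hx]
  · rw [mul_zero]
  · rw [Real.sign_of_pos (mul_pos hk hx), Real.sign_of_pos hx]

lemma one_le_log_two_div_pi_mul_sq {ε : ℝ} (hε0 : 0 < ε) (hε : ε ≤ √(2 / (exp 1 * π))) :
    1 ≤ log (2 / (π * ε ^ 2)) := by
  have hsq := pow_le_pow_left₀ hε0.le hε 2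
  rw [sq_sqrt (by positivity), le_div_iff₀ (by positivity)] at hsq
  rw [le_log_iff_exp_le (by positivity), le_div_iff₀ (by positivity)]
  linarith

lemma exp_neg_sq_div_le {ε y : ℝ} (hε0 : 0 < ε) (hy : 0 < y)
    (hyε : 2 * y ^ 2 = log (2 / (π * ε ^ 2))) (hy1 : 1 ≤ 2 * y ^ 2) :
    exp (-y ^ 2) / (y * √π) ≤ ε := by
  have hexp : exp (-y ^ 2) ^ 2 = π * ε ^ 2 / 2 := by
    rw [← exp_nat_mul, show (2 : ℕ) * -y ^ 2 = -(2 * y ^ 2) by push_cast; ring, hyε, exp_neg,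
      exp_log (by positivity), inv_div]
  rw [← pow_le_pow_iff_left₀ (by positivity) hε0.le two_ne_zero, div_pow, hexp, mul_pow,
    sq_sqrt pi_pos.le, div_le_iff₀ (by positivity)]
  nlinarith [pi_pos, sq_pos_of_pos hε0]

/-- For `ε ∈ (0, √(2/(eπ))]`, `Δ > 0`, and `k = (√2/Δ)·√(ln(2/(πε²)))`, the scaled error
function approximates the sign function: `|erf(kx) - sgn(x)| ≤ ε` whenever `|x| ≥ Δ/2`. -/
theorem erf_approx_sign (ε Δ k : ℝ) (hε0 : 0 < ε)
    (hε : ε ≤ Real.sqrt (2 / (Real.exp 1 * π))) (hΔ : 0 < Δ)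
    (hk : k = (Real.sqrt 2 / Δ) * Real.sqrt (Real.log (2 / (π * ε ^ 2)))) :
    ∀ x : ℝ, Δ / 2 ≤ |x| → |erf (k * x) - Real.sign x| ≤ ε := by
  intro x hx
  have hL := one_le_log_two_div_pi_mul_sq hε0 hε
  have hk0 : 0 < k := hk ▸ mul_pos (by positivity) (sqrt_pos.mpr (by linarith))
  have hy₀ : 2 * (k * (Δ / 2)) ^ 2 = log (2 / (π * ε ^ 2)) := by
    rw [hk, mul_pow, mul_pow, div_pow, sq_sqrt zero_le_two, sq_sqrt (by linarith)]
    field_simp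
  calc |erf (k * x) - Real.sign x| = |erf (k * x) - Real.sign (k * x)| := by
        rw [Real.sign_mul_of_pos hk0]
    _ ≤ exp (-(k * (Δ / 2)) ^ 2) / (k * (Δ / 2) * √π) :=
        abs_erf_sub_sign_le (by positivity) (by rw [abs_mul, abs_of_pos hk0]; gcongr)
    _ ≤ ε := exp_neg_sq_div_le hε0 (by positivity) hy₀ (hy₀ ▸ hL)
end

section
/- For all real λ > 0 and integers n, t ≥ 1, the truncated Chebyshev/Taylor approximation error of the exponential satisfies: sup_{y∈[-1,1]} |e^{-λ(y+1)} - e^{-λ}∑_{j=0}^{t} ((-λ)^j/j!)·p_j(y)| ≤ 2e^{-n²/(2t)} + e^{-λ-t}, provided λe² ≤ t, where p_j is a degree-≤n polynomial approximating y^j with sup_{y∈[-1,1]}|y^j - p_j(y)| ≤ 2e^{-n²/(2j)} ≤ 2e^{-n²/(2t)} for j ≤ t, and the coefficient sum bound e^{-λ}∑_{j=0}^{t} λ^j/j! ≤ 1 is used. -/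
/-!
Write `e^{-λ(y+1)} = e^{-λ} e^{-λy}`. Truncating the Taylor series of `e^{-λy}` after degree `t`
costs at most `e^{-t}`: since `k! ≥ (k/e)^k`, the `k`-th tail term is at most `e^{-k}` once
`λe² ≤ k`, and the geometric tail sums to `e^{-t}/(e-1)`. Replacing each `y^j` by `p_j(y)` then
costs at most `e^{-λ} ∑ λ^j/j! · 2e^{-n²/(2t)} ≤ 2e^{-n²/(2t)}`.
-/

open Real Finset
open scoped Nat

theorem pow_div_factorial_le_mul_exp_one_div_pow {x : ℝ} (hx : 0 ≤ x) (k : ℕ) :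
    x ^ k / k ! ≤ (x * exp 1 / k) ^ k := by
  rcases k.eq_zero_or_pos with rfl | hk
  · simp
  have hk' : (0 : ℝ) < k := by exact_mod_cast hk
  calc x ^ k / k ! = (x / k) ^ k * ((k : ℝ) ^ k / k !) := by rw [div_pow]; field_simp
    _ ≤ (x / k) ^ k * exp k := by gcongr; exact pow_div_factorial_le_exp _ hk'.le k
    _ = (x * exp 1 / k) ^ k := by rw [← exp_one_pow]; ring

theorem pow_div_factorial_le_exp_neg_one_pow {x : ℝ} (hx : 0 ≤ x) {k : ℕ}
    (hk : x * exp 1 ^ 2 ≤ k) : x ^ k / k ! ≤ exp (-1) ^ k := by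
  rcases k.eq_zero_or_pos with rfl | hk0
  · simp
  refine (pow_div_factorial_le_mul_exp_one_div_pow hx k).trans
    (pow_le_pow_left₀ (by positivity) ?_ k)
  rw [div_le_iff₀ (by exact_mod_cast hk0)]
  calc x * exp 1 = x * exp 1 ^ 2 * exp (-1) := by rw [exp_neg]; field_simp
    _ ≤ exp (-1) * k := by rw [mul_comm (exp (-1))]; gcongr

theorem exp_neg_one_mul_inv_one_sub_le_one : exp (-1) * (1 - exp (-1))⁻¹ ≤ 1 := by
  have h : exp (-1) * 2 < 1 := by
    rw [exp_neg, inv_mul_lt_iff₀ (exp_pos 1)]; linarith [exp_one_gt_two]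
  rw [mul_inv_le_iff₀ (by linarith)]
  linarith

theorem abs_exp_sub_sum_range_le_exp_neg {x : ℝ} {t : ℕ} (h : |x| * exp 1 ^ 2 ≤ t) :
    |exp x - ∑ j ∈ range (t + 1), x ^ j / j !| ≤ exp (-t) := by
  have hexp : HasSum (fun j ↦ x ^ j / j !) (exp x) := by
    rw [exp_eq_exp_ℝ]; exact NormedSpace.expSeries_div_hasSum_exp x
  have hr0 : 0 ≤ exp (-1) := (exp_pos _).le
  have hr1 : exp (-1) < 1 := exp_lt_one_iff.mpr (by norm_num)
  have hgeom := (hasSum_geometric_of_lt_one hr0 hr1).mul_left (exp (-1) ^ (t + 1))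
  have htail := ((hasSum_nat_add_iff' (t + 1)).mpr hexp).norm_le_of_bounded hgeom fun i ↦ by
    rw [norm_div, norm_pow, norm_natCast, norm_eq_abs, ← pow_add, add_comm (t + 1)]
    exact pow_div_factorial_le_exp_neg_one_pow (abs_nonneg x) (h.trans (by push_cast; linarith))
  calc |exp x - ∑ j ∈ range (t + 1), x ^ j / j !|
      ≤ exp (-1) ^ (t + 1) * (1 - exp (-1))⁻¹ := htail
    _ = exp (-t) * (exp (-1) * (1 - exp (-1))⁻¹) := by
        rw [pow_succ, ← exp_nat_mul]; ring_nf
    _ ≤ exp (-t) := mul_le_of_le_one_right (exp_pos _).le exp_neg_one_mul_inv_one_sub_le_one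

theorem abs_exp_neg_mul_sum_range_le {l ε : ℝ} (hl : 0 ≤ l) {t : ℕ} {e : ℕ → ℝ}
    (he : ∀ j ≤ t, |e j| ≤ ε) :
    |exp (-l) * ∑ j ∈ range (t + 1), (-l) ^ j / j ! * e j| ≤ ε := by
  have hε : 0 ≤ ε := (abs_nonneg _).trans (he 0 t.zero_le)
  calc |exp (-l) * ∑ j ∈ range (t + 1), (-l) ^ j / j ! * e j|
      = exp (-l) * |∑ j ∈ range (t + 1), (-l) ^ j / j ! * e j| := by
        rw [abs_mul, abs_of_pos (exp_pos _)]
    _ ≤ exp (-l) * ∑ j ∈ range (t + 1), l ^ j / j ! * ε := by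
        gcongr
        refine (abs_sum_le_sum_abs _ _).trans (sum_le_sum fun j hj ↦ ?_)
        rw [abs_mul, abs_div, abs_pow, abs_neg, abs_of_nonneg hl, Nat.abs_cast]
        gcongr
        exact he j (mem_range_succ_iff.mp hj)
    _ ≤ exp (-l) * (exp l * ε) := by
        rw [← sum_mul]; gcongr; exact sum_le_exp_of_nonneg hl _
    _ = ε := by rw [← mul_assoc, ← exp_add, neg_add_cancel, exp_zero, one_mul]

theorem exp_poly_approx_error_general (l : ℝ) (hl : 0 < l) (n t : ℕ)
    (hlt : l * Real.exp 1 ^ 2 ≤ t)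
    (p : ℕ → Polynomial ℝ)
    (hp : ∀ j ≤ t, ∀ y ∈ Set.Icc (-1 : ℝ) 1,
      |y ^ j - (p j).eval y| ≤ 2 * Real.exp (-(n : ℝ) ^ 2 / (2 * t))) :
    ∀ y ∈ Set.Icc (-1 : ℝ) 1,
      |Real.exp (-l * (y + 1)) -
          Real.exp (-l) * ∑ j ∈ Finset.range (t + 1), ((-l) ^ j / Nat.factorial j) * (p j).eval y| ≤
        2 * Real.exp (-(n : ℝ) ^ 2 / (2 * t)) + Real.exp (-l - t) := by
  intro y hy
  have hly : |-l * y| * exp 1 ^ 2 ≤ t := by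
    refine le_trans ?_ hlt
    rw [abs_mul, abs_neg, abs_of_pos hl]
    gcongr
    exact mul_le_of_le_one_right hl.le (abs_le.mpr hy)
  have htaylor := abs_exp_sub_sum_range_le_exp_neg hly
  have hpoly := abs_exp_neg_mul_sum_range_le hl.le fun j hj ↦ hp j hj y hy
  have hsplit : exp (-l * (y + 1)) - exp (-l) * ∑ j ∈ range (t + 1), (-l) ^ j / j ! * (p j).eval y
      = exp (-l) * (exp (-l * y) - ∑ j ∈ range (t + 1), (-l * y) ^ j / j !)
        + exp (-l) * ∑ j ∈ range (t + 1), (-l) ^ j / j ! * (y ^ j - (p j).eval y) := by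
    simp only [mul_sub, mul_sum, sum_sub_distrib, mul_pow, ← exp_add]
    ring_nf
  rw [hsplit, sub_eq_add_neg (-l), exp_add, add_comm (2 * _)]
  refine (abs_add_le _ _).trans (add_le_add ?_ hpoly)
  rw [abs_mul, abs_of_pos (exp_pos _)]
  gcongr

/-- Truncated Chebyshev/Taylor approximation of the exponential: if `λ > 0`, `λe² ≤ t`,
and `p_j` are polynomials of degree `≤ n` with
`sup_{y ∈ [-1,1]} |y^j - p_j(y)| ≤ 2 e^{-n²/(2t)}` for all `j ≤ t`, then
`sup_{y ∈ [-1,1]} |e^{-λ(y+1)} - e^{-λ} ∑_{j=0}^t ((-λ)^j/j!) p_j(y)| ≤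
  2 e^{-n²/(2t)} + e^{-λ-t}`. -/
theorem exp_poly_approx_error (l : ℝ) (hl : 0 < l) (n t : ℕ) (hn : 1 ≤ n) (ht : 1 ≤ t)
    (hlt : l * Real.exp 1 ^ 2 ≤ t)
    (p : ℕ → Polynomial ℝ) (hdeg : ∀ j, (p j).natDegree ≤ n)
    (hp : ∀ j ≤ t, ∀ y ∈ Set.Icc (-1 : ℝ) 1,
      |y ^ j - (p j).eval y| ≤ 2 * Real.exp (-(n : ℝ) ^ 2 / (2 * t))) :
    ∀ y ∈ Set.Icc (-1 : ℝ) 1,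
      |Real.exp (-l * (y + 1)) -
          Real.exp (-l) * ∑ j ∈ Finset.range (t + 1), ((-l) ^ j / Nat.factorial j) * (p j).eval y| ≤
        2 * Real.exp (-(n : ℝ) ^ 2 / (2 * t)) + Real.exp (-l - t) :=
  exp_poly_approx_error_general l hl n t hlt p hp
end
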